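/- arXiv:1401.1627 — 2 statements merged into one kernel-verified Lean document; each statement's English description precedes it below -/
import Mathlib

section
/- Let c₁, c₂, n₁, n₂ > 0 be real numbers with (c₁ − c₂)(c₁n₁ − c₂n₂) < 0, and set m_j := n_j/c_j (j = 1,2). For r₀ ≥ 0 real and z ∈ ℂ with Re z = −1 and |Im z| ≤ 1, let ρ_j(z) be the unique complex number with Im ρ_j(z) > 0 and ρ_j(z)² + r₀ = m_j·z, and set κ(z) := n₂/(2ρ₂(z)) − n₁/(2ρ₁(z)). Then there exist constants γ₀ ∈ (0,1] and C > 0, depending only on c₁, c₂, n₁, n₂, such that for every r₀ ≥ 0 and every z with Re z = −1 and |Im z| ≤ γ₀ one has |Im κ(z)| ≥ C(1 + r₀)^{−1/2}. -/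
/-!
On the line `Re z = -1` write `z = -1 + iy` and `sⱼ = √(r₀ + mⱼ)`. At `y = 0` the roots are
`ρⱼ = i sⱼ`, so `Im κ = n₁/(2s₁) - n₂/(2s₂)`. The numerator of this difference is, up to a
positive factor, the affine function `n₁² s₂² - n₂² s₁² = (n₁² - n₂²) r₀ + (n₁² m₂ - n₂² m₁)`,
and condition (1.8) says that its two coefficients have the same sign; hence it is of size
`1 + r₀`, while the denominator is of size `(1 + r₀)^{3/2}`. For `y ≠ 0` the imaginary part of
`1/ρⱼ` moves away from `-1/sⱼ` only by `O(y²/sⱼ)`, which is absorbed for small `γ₀`.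
-/

open Real

lemma Complex.abs_im_inv_add_inv_le {ρ : ℂ} {s : ℝ} (hρ : 0 < ρ.im) (hs : 0 < s)
    (hre : (ρ ^ 2).re = -s ^ 2) :
    |(ρ⁻¹).im + s⁻¹| ≤ (ρ ^ 2).im ^ 2 / (2 * s ^ 5) := by
  obtain ⟨a, b⟩ := ρ
  simp only [sq, Complex.mul_re, Complex.mul_im, Complex.inv_im, Complex.normSq_mk] at hρ hre ⊢
  have hb : b * b = a * a + s * s := by linarith
  have hsb : s ≤ b := by nlinarith
  -- `b (b - s) = a² b / (b + s) ≤ a²`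
  have hgap : b * (b - s) ≤ a * a := by nlinarith
  have hN : s * s ≤ a * a + b * b := by nlinarith
  have hdiff : -b / (a * a + b * b) + s⁻¹ = (a * a + b * (b - s)) / (s * (a * a + b * b)) := by
    field_simp; ring
  have hnum : 0 ≤ a * a + b * (b - s) := by nlinarith
  rw [hdiff, abs_of_nonneg (div_nonneg hnum (mul_pos hs (by nlinarith)).le)]
  calc (a * a + b * (b - s)) / (s * (a * a + b * b))
      ≤ 2 * (a * a) / (s * (s * s)) := by
        apply div_le_div₀ (by nlinarith) (by linarith) (by positivity)
        exact mul_le_mul_of_nonneg_left hN hs.le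
    _ ≤ 2 * (a * a) * (b * b) / (s * (s * s) * (s * s)) := by
        rw [div_le_div_iff₀ (by positivity) (by positivity)]
        have : 0 ≤ 2 * (a * a) * (s * (s * s)) := by have := mul_self_nonneg a; positivity
        nlinarith [mul_le_mul_of_nonneg_left (mul_self_le_mul_self hs.le hsb) this]
    _ = (a * b + b * a) * (a * b + b * a) / (2 * s ^ 5) := by ring

lemma abs_im_div_two_mul_root_add_le {n m r₀ : ℝ} {z ρ : ℂ} (hn : 0 ≤ n) (hm : 0 < m)
    (hr₀ : 0 ≤ r₀) (hz : z.re = -1) (hρ : 0 < ρ.im) (hroot : ρ ^ 2 + r₀ = m * z) :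
    |((n : ℂ) / (2 * ρ)).im + n / (2 * √(r₀ + m))| ≤ n * z.im ^ 2 / (4 * √(r₀ + m)) := by
  set s := √(r₀ + m)
  have hs : 0 < s := sqrt_pos.2 (by linarith)
  have hs2 : s ^ 2 = r₀ + m := sq_sqrt (by linarith)
  have hsq : ρ ^ 2 = m * z - r₀ := eq_sub_of_add_eq hroot
  have hre : (ρ ^ 2).re = -s ^ 2 := by
    rw [hsq, hs2]; simp [hz]; ring
  have him : (ρ ^ 2).im = m * z.im := by simp [hsq]
  have hscale : ((n : ℂ) / (2 * ρ)).im + n / (2 * s) = n / 2 * ((ρ⁻¹).im + s⁻¹) := by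
    have : (n : ℂ) / (2 * ρ) = ((n / 2 : ℝ) : ℂ) * ρ⁻¹ := by push_cast; ring
    rw [this, Complex.im_ofReal_mul]; ring
  have hm2 : m ^ 2 ≤ s ^ 4 := by nlinarith
  rw [hscale, abs_mul, abs_of_nonneg (by positivity)]
  calc n / 2 * |(ρ⁻¹).im + s⁻¹| ≤ n / 2 * ((m * z.im) ^ 2 / (2 * s ^ 5)) := by
        rw [← him]; gcongr; exact Complex.abs_im_inv_add_inv_le hρ hs hre
    _ ≤ n / 2 * (s ^ 4 * z.im ^ 2 / (2 * s ^ 5)) := by rw [mul_pow]; gcongr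
    _ = n * z.im ^ 2 / (4 * s) := by field_simp; ring

lemma min_abs_mul_one_add_le_abs_mul_add {a b r : ℝ} (hab : 0 < a * b) (hr : 0 ≤ r) :
    min |a| |b| * (1 + r) ≤ |a * r + b| := by
  have hsplit : |a * r + b| = |a| * r + |b| := by
    rcases mul_pos_iff.1 hab with ⟨ha, hb⟩ | ⟨ha, hb⟩
    · rw [abs_of_pos ha, abs_of_pos hb, abs_of_nonneg (by positivity)]
    · rw [abs_of_neg ha, abs_of_neg hb, abs_of_nonpos (by nlinarith)]; ring
  rw [hsplit]
  nlinarith [min_le_left |a| |b|, min_le_right |a| |b|]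

lemma sqrt_mul_sqrt_one_add_le_sqrt_add {μ m r : ℝ} (hμ : μ ≤ 1) (hμm : μ ≤ m) (hr : 0 ≤ r) :
    √μ * √(1 + r) ≤ √(r + m) := by
  rw [← sqrt_mul' _ (by linarith)]
  exact sqrt_le_sqrt (by nlinarith)

lemma sqrt_add_le_sqrt_mul_sqrt_one_add {M m r : ℝ} (hM : 1 ≤ M) (hmM : m ≤ M) (hr : 0 ≤ r) :
    √(r + m) ≤ √M * √(1 + r) := by
  rw [← sqrt_mul' _ (by linarith)]
  exact sqrt_le_sqrt (by nlinarith)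

lemma abs_im_div_sub_div_sub_half_le {n₁ n₂ m₁ m₂ μ r₀ : ℝ} {z ρ₁ ρ₂ : ℂ} (hn₁ : 0 ≤ n₁)
    (hn₂ : 0 ≤ n₂) (hμ : 0 < μ) (hμ1 : μ ≤ 1) (hμm₁ : μ ≤ m₁) (hμm₂ : μ ≤ m₂) (hr₀ : 0 ≤ r₀)
    (hz : z.re = -1) (hρ₁ : 0 < ρ₁.im) (hρ₂ : 0 < ρ₂.im) (h₁ : ρ₁ ^ 2 + r₀ = m₁ * z)
    (h₂ : ρ₂ ^ 2 + r₀ = m₂ * z) :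
    |((n₂ : ℂ) / (2 * ρ₂) - (n₁ : ℂ) / (2 * ρ₁)).im - (n₁ / √(r₀ + m₁) - n₂ / √(r₀ + m₂)) / 2|
      ≤ (n₁ + n₂) / √μ * z.im ^ 2 / (4 * √(1 + r₀)) := by
  have e₁ := abs_im_div_two_mul_root_add_le hn₁ (hμ.trans_le hμm₁) hr₀ hz hρ₁ h₁
  have e₂ := abs_im_div_two_mul_root_add_le hn₂ (hμ.trans_le hμm₂) hr₀ hz hρ₂ h₂
  have hs₁ := sqrt_mul_sqrt_one_add_le_sqrt_add hμ1 hμm₁ hr₀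
  have hs₂ := sqrt_mul_sqrt_one_add_le_sqrt_add hμ1 hμm₂ hr₀
  have hu : 0 < √(1 + r₀) := sqrt_pos.2 (by linarith)
  rw [Complex.sub_im]
  calc _ = |(((n₂ : ℂ) / (2 * ρ₂)).im + n₂ / (2 * √(r₀ + m₂)))
          - (((n₁ : ℂ) / (2 * ρ₁)).im + n₁ / (2 * √(r₀ + m₁)))| := by ring_nf
    _ ≤ _ := abs_sub _ _
    _ ≤ n₂ * z.im ^ 2 / (4 * √(r₀ + m₂)) + n₁ * z.im ^ 2 / (4 * √(r₀ + m₁)) := add_le_add e₂ e₁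
    _ ≤ n₂ * z.im ^ 2 / (4 * (√μ * √(1 + r₀))) + n₁ * z.im ^ 2 / (4 * (√μ * √(1 + r₀))) := by
        gcongr
    _ = _ := by field_simp; ring

lemma exists_div_sqrt_le_abs_div_sqrt_sub {n₁ n₂ m₁ m₂ : ℝ} (hn₁ : 0 < n₁) (hn₂ : 0 < n₂)
    (hm₁ : 0 < m₁) (hm₂ : 0 < m₂)
    (hsign : 0 < (n₁ ^ 2 - n₂ ^ 2) * (n₁ ^ 2 * m₂ - n₂ ^ 2 * m₁)) :
    ∃ C > 0, ∀ r, 0 ≤ r → C / √(1 + r) ≤ |n₁ / √(r + m₁) - n₂ / √(r + m₂)| := by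
  set A := min |n₁ ^ 2 - n₂ ^ 2| |n₁ ^ 2 * m₂ - n₂ ^ 2 * m₁|
  have hA : 0 < A := by
    rcases mul_ne_zero_iff.1 hsign.ne' with ⟨h₁, h₂⟩
    exact lt_min (abs_pos.2 h₁) (abs_pos.2 h₂)
  set M := max 1 (max m₁ m₂)
  have hM : 1 ≤ M := le_max_left _ _
  have hm₁M : m₁ ≤ M := (le_max_left _ _).trans (le_max_right _ _)
  have hm₂M : m₂ ≤ M := (le_max_right _ _).trans (le_max_right _ _)
  refine ⟨A / ((n₁ + n₂) * (M * √M)), by positivity, fun r hr => ?_⟩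
  set u := √(1 + r)
  set s₁ := √(r + m₁)
  set s₂ := √(r + m₂)
  have hu : 0 < u := sqrt_pos.2 (by linarith)
  have hs₁ : 0 < s₁ := sqrt_pos.2 (by linarith)
  have hs₂ : 0 < s₂ := sqrt_pos.2 (by linarith)
  have hs₁M : s₁ ≤ √M * u := sqrt_add_le_sqrt_mul_sqrt_one_add hM hm₁M hr
  have hs₂M : s₂ ≤ √M * u := sqrt_add_le_sqrt_mul_sqrt_one_add hM hm₂M hr
  have hnum : A * u ^ 2 ≤ |n₁ ^ 2 * s₂ ^ 2 - n₂ ^ 2 * s₁ ^ 2| := by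
    rw [sq_sqrt (by linarith), sq_sqrt (by linarith), sq_sqrt (by linarith)]
    convert min_abs_mul_one_add_le_abs_mul_add hsign hr using 2
    ring
  have hden : s₁ * s₂ * (n₁ * s₂ + n₂ * s₁) ≤ (n₁ + n₂) * (√M * u) ^ 3 := by
    have : n₁ * s₂ + n₂ * s₁ ≤ (n₁ + n₂) * (√M * u) := by nlinarith
    calc s₁ * s₂ * (n₁ * s₂ + n₂ * s₁) ≤ (√M * u) * (√M * u) * ((n₁ + n₂) * (√M * u)) := by
          gcongr
      _ = (n₁ + n₂) * (√M * u) ^ 3 := by ring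
  have hid : n₁ / s₁ - n₂ / s₂ = (n₁ ^ 2 * s₂ ^ 2 - n₂ ^ 2 * s₁ ^ 2) /
      (s₁ * s₂ * (n₁ * s₂ + n₂ * s₁)) := by
    field_simp; ring
  have hden_pos : 0 < s₁ * s₂ * (n₁ * s₂ + n₂ * s₁) := by positivity
  rw [hid, abs_div, abs_of_pos hden_pos]
  calc A / ((n₁ + n₂) * (M * √M)) / u = A * u ^ 2 / ((n₁ + n₂) * (√M * u) ^ 3) := by
        have hM3 : √M ^ 3 = M * √M := by rw [pow_succ, sq_sqrt (by linarith)]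
        rw [mul_pow, hM3]
        field_simp
    _ ≤ _ := div_le_div₀ (abs_nonneg _) hnum (by positivity) hden

lemma sq_sub_sq_mul_pos_of_transmission {c₁ c₂ n₁ n₂ : ℝ} (hc₁ : 0 < c₁) (hc₂ : 0 < c₂)
    (hn₁ : 0 < n₁) (hn₂ : 0 < n₂) (h18 : (c₁ - c₂) * (c₁ * n₁ - c₂ * n₂) < 0) :
    0 < (n₁ ^ 2 - n₂ ^ 2) * (n₁ ^ 2 * (n₂ / c₂) - n₂ ^ 2 * (n₁ / c₁)) := by
  -- `c₁ (n₁ - n₂)(c₁n₁ - c₂n₂) = (c₁n₁ - c₂n₂)² - n₂ (c₁ - c₂)(c₁n₁ - c₂n₂)`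
  have hsame : 0 < (n₁ - n₂) * (c₁ * n₁ - c₂ * n₂) := by
    refine pos_of_mul_pos_right (a := c₁) ?_ hc₁.le
    nlinarith [mul_pos hn₂ (neg_pos.2 h18), sq_nonneg (c₁ * n₁ - c₂ * n₂)]
  have hfactor : (n₁ ^ 2 - n₂ ^ 2) * (n₁ ^ 2 * (n₂ / c₂) - n₂ ^ 2 * (n₁ / c₁)) =
      (n₁ + n₂) * (n₁ * n₂ / (c₁ * c₂)) * ((n₁ - n₂) * (c₁ * n₁ - c₂ * n₂)) := by
    field_simp; ring
  rw [hfactor]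
  exact mul_pos (by positivity) hsame

/-- Estimate (5.35) of the paper: under condition (1.8), `(c₁−c₂)(c₁n₁−c₂n₂) < 0`, with
`mⱼ = nⱼ/cⱼ`, `ρⱼ(z)` the root with positive imaginary part of `ρ² + r₀ = mⱼ z` and
`κ(z) = n₂/(2ρ₂(z)) − n₁/(2ρ₁(z))`, there are constants `γ₀ ∈ (0,1]` and `C > 0`,
depending only on `c₁, c₂, n₁, n₂`, such that `|Im κ(z)| ≥ C (1+r₀)^{−1/2}` for every
`r₀ ≥ 0` and every `z` with `Re z = −1`, `|Im z| ≤ γ₀`. -/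
theorem stmt_16 (c₁ c₂ n₁ n₂ : ℝ) (hc₁ : 0 < c₁) (hc₂ : 0 < c₂) (hn₁ : 0 < n₁) (hn₂ : 0 < n₂)
    (h18 : (c₁ - c₂) * (c₁ * n₁ - c₂ * n₂) < 0) :
    ∃ γ₀ C : ℝ, 0 < γ₀ ∧ γ₀ ≤ 1 ∧ 0 < C ∧
      ∀ r₀ : ℝ, 0 ≤ r₀ → ∀ z : ℂ, z.re = -1 → |z.im| ≤ γ₀ →
        ∀ ρ₁ ρ₂ : ℂ, 0 < ρ₁.im → 0 < ρ₂.im →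
          ρ₁ ^ 2 + (r₀ : ℂ) = ((n₁ / c₁ : ℝ) : ℂ) * z →
          ρ₂ ^ 2 + (r₀ : ℂ) = ((n₂ / c₂ : ℝ) : ℂ) * z →
          C * (1 + r₀) ^ (-(1 : ℝ) / 2) ≤
            |((n₂ : ℂ) / (2 * ρ₂) - (n₁ : ℂ) / (2 * ρ₁)).im| := by
  have hm₁ : 0 < n₁ / c₁ := div_pos hn₁ hc₁
  have hm₂ : 0 < n₂ / c₂ := div_pos hn₂ hc₂
  obtain ⟨C, hC, hmain⟩ := exists_div_sqrt_le_abs_div_sqrt_sub hn₁ hn₂ hm₁ hm₂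
    (sq_sub_sq_mul_pos_of_transmission hc₁ hc₂ hn₁ hn₂ h18)
  set μ := min 1 (min (n₁ / c₁) (n₂ / c₂))
  have hμ : 0 < μ := lt_min one_pos (lt_min hm₁ hm₂)
  set K := (n₁ + n₂) / √μ
  have hK : 0 < K := by positivity
  refine ⟨min 1 (C / K), C / 4, lt_min one_pos (by positivity), min_le_left _ _, by positivity, ?_⟩
  intro r₀ hr₀ z hz hy ρ₁ ρ₂ hρ₁ hρ₂ h₁ h₂
  set u := √(1 + r₀)
  have hrpow : (1 + r₀) ^ (-(1 : ℝ) / 2) = u⁻¹ := by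
    rw [neg_div, rpow_neg (by linarith), ← sqrt_eq_rpow]
  have hKy : K * z.im ^ 2 ≤ C := by
    rw [← sq_abs]
    have hy1 := hy.trans (min_le_left _ _)
    have hyK := (le_div_iff₀' hK).1 (hy.trans (min_le_right _ _))
    nlinarith [abs_nonneg z.im]
  have hκ := abs_im_div_sub_div_sub_half_le hn₁.le hn₂.le hμ (min_le_left _ _)
    ((min_le_right _ _).trans (min_le_left _ _)) ((min_le_right _ _).trans (min_le_right _ _))
    hr₀ hz hρ₁ hρ₂ h₁ h₂
  set D := n₁ / √(r₀ + n₁ / c₁) - n₂ / √(r₀ + n₂ / c₂)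
  set κ := ((n₂ : ℂ) / (2 * ρ₂) - (n₁ : ℂ) / (2 * ρ₁)).im
  have hKyu : K * z.im ^ 2 / (4 * u) ≤ C / u / 4 := by
    rw [div_div, mul_comm u]; gcongr
  rw [hrpow, ← div_eq_mul_inv]
  calc C / 4 / u = C / u / 2 - C / u / 4 := by ring
    _ ≤ |D| / 2 - |κ - D / 2| := by linarith [hmain r₀ hr₀]
    _ = |D / 2| - |D / 2 - κ| := by rw [abs_div, abs_two, abs_sub_comm κ]
    _ ≤ |κ| := by simpa using abs_sub_abs_le_abs_sub (D / 2) (D / 2 - κ)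
end

section
/- Let c₁, c₂, n₁, n₂ > 0 be real numbers with (c₁ − c₂)(c₁n₁ − c₂n₂) > 0, and set m_j := n_j/c_j (j = 1,2). Let r₀ ≥ 0 be real, let z ∈ ℂ with Re z = −1 and |Im z| ≤ 1, and let ρ₁, ρ₂ ∈ ℂ satisfy Im ρ_j > 0 and ρ_j² + r₀ = m_j·z for j = 1,2. Then there is a constant C > 0 depending only on c₁, c₂, n₁, n₂ (not on r₀ or z) such that |c₁ρ₁ − c₂ρ₂| ≥ C(1 + r₀)^{1/2}. -/
/-!
Multiplying by the conjugate factor gives the identity (5.6),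
`(c₁ρ₁ - c₂ρ₂)(c₁ρ₁ + c₂ρ₂) = (c₁n₁ - c₂n₂) z - (c₁² - c₂²) r₀`.
Condition (1.7) says that `c₁n₁ - c₂n₂` and `c₁² - c₂²` have the same sign, so on `Re z = -1`
the real part of the right-hand side has modulus `|c₁n₁ - c₂n₂| + |c₁² - c₂²| r₀ ≳ 1 + r₀`,
while `|ρⱼ|² = |mⱼ z - r₀| ≲ 1 + r₀` bounds the conjugate factor by `≲ (1 + r₀)^{1/2}`.
-/

open Complex

lemma mul_sub_mul_mul_add_eq_of_sq_add_eq {c₁ c₂ m₁ m₂ r : ℝ} {z ρ₁ ρ₂ : ℂ}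
    (h₁ : ρ₁ ^ 2 + r = m₁ * z) (h₂ : ρ₂ ^ 2 + r = m₂ * z) :
    (c₁ * ρ₁ - c₂ * ρ₂) * (c₁ * ρ₁ + c₂ * ρ₂) =
      ((c₁ ^ 2 * m₁ - c₂ ^ 2 * m₂ : ℝ) : ℂ) * z - ((c₁ ^ 2 - c₂ ^ 2 : ℝ) : ℂ) * r := by
  push_cast
  linear_combination (c₁ : ℂ) ^ 2 * h₁ - (c₂ : ℂ) ^ 2 * h₂

lemma min_abs_mul_one_add_le_abs_add_mul {k d r : ℝ} (hkd : 0 < k * d) (hr : 0 ≤ r) :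
    min |k| |d| * (1 + r) ≤ |k + d * r| := by
  have hsame : |k + d * r| = |k| + |d| * r := by
    rw [(abs_add_eq_add_abs_iff _ _).2, abs_mul, abs_of_nonneg hr]
    rcases pos_and_pos_or_neg_and_neg_of_mul_pos hkd with ⟨hk, hd⟩ | ⟨hk, hd⟩
    · exact Or.inl ⟨hk.le, by positivity⟩
    · exact Or.inr ⟨hk.le, mul_nonpos_of_nonpos_of_nonneg hd.le hr⟩
  rw [hsame, mul_one_add]
  gcongr
  exacts [min_le_left _ _, min_le_right _ _]

lemma min_abs_mul_one_add_le_norm {k d r : ℝ} {z : ℂ} (hkd : 0 < k * d) (hr : 0 ≤ r)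
    (hz : z.re = -1) :
    min |k| |d| * (1 + r) ≤ ‖(k : ℂ) * z - (d : ℂ) * r‖ :=
  calc min |k| |d| * (1 + r) ≤ |k + d * r| := min_abs_mul_one_add_le_abs_add_mul hkd hr
    _ = |((k : ℂ) * z - (d : ℂ) * r).re| := by
        simp [hz, ← abs_neg (k + d * r), sub_eq_add_neg, add_comm]
    _ ≤ ‖(k : ℂ) * z - (d : ℂ) * r‖ := abs_re_le_norm _

lemma norm_le_sqrt_mul_sqrt_of_sq_add_eq {m r : ℝ} {z ρ : ℂ} (hr : 0 ≤ r) (hz : ‖z‖ ≤ 2)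
    (h : ρ ^ 2 + r = m * z) :
    ‖ρ‖ ≤ √(2 * |m| + 1) * √(1 + r) := by
  have hsq : ‖ρ‖ ^ 2 ≤ |m| * ‖z‖ + r :=
    calc ‖ρ‖ ^ 2 = ‖(m : ℂ) * z - r‖ := by rw [← norm_pow, eq_sub_of_add_eq h]
      _ ≤ ‖(m : ℂ) * z‖ + ‖(r : ℂ)‖ := norm_sub_le _ _
      _ = |m| * ‖z‖ + r := by rw [norm_mul, norm_real, norm_real, Real.norm_of_nonneg hr]; rfl
  rw [← Real.sqrt_mul (by positivity), Real.le_sqrt (norm_nonneg _) (by positivity)]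
  nlinarith [abs_nonneg m, mul_le_mul_of_nonneg_left hz (abs_nonneg m)]

lemma div_mul_sqrt_le_of_mul_le {a b K μ t : ℝ} (ha : 0 ≤ a) (hK : 0 < K) (ht : 0 < t)
    (hb : b ≤ K * √t) (hab : μ * t ≤ a * b) :
    μ / K * √t ≤ a := by
  have hs := Real.sqrt_pos.2 ht
  rw [div_mul_eq_mul_div, div_le_iff₀ hK]
  refine le_of_mul_le_mul_right ?_ hs
  calc μ * √t * √t = μ * t := by rw [mul_assoc, Real.mul_self_sqrt ht.le]
    _ ≤ a * b := hab
    _ ≤ a * (K * √t) := mul_le_mul_of_nonneg_left hb ha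
    _ = a * K * √t := by ring

theorem stmt_19_general (c₁ c₂ n₁ n₂ : ℝ) (hc₁ : 0 < c₁) (hc₂ : 0 < c₂)
    (h17 : 0 < (c₁ - c₂) * (c₁ * n₁ - c₂ * n₂)) :
    ∃ C : ℝ, 0 < C ∧
      ∀ r₀ : ℝ, 0 ≤ r₀ → ∀ z : ℂ, z.re = -1 → |z.im| ≤ 1 →
        ∀ ρ₁ ρ₂ : ℂ, 0 < ρ₁.im → 0 < ρ₂.im →
          ρ₁ ^ 2 + (r₀ : ℂ) = ((n₁ / c₁ : ℝ) : ℂ) * z →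
          ρ₂ ^ 2 + (r₀ : ℂ) = ((n₂ / c₂ : ℝ) : ℂ) * z →
          C * Real.sqrt (1 + r₀) ≤ ‖(c₁ : ℂ) * ρ₁ - (c₂ : ℂ) * ρ₂‖ := by
  set k := c₁ * n₁ - c₂ * n₂
  set d := c₁ ^ 2 - c₂ ^ 2
  have hkd : 0 < k * d := by
    rw [show k * d = (c₁ + c₂) * ((c₁ - c₂) * k) by ring]
    exact mul_pos (by positivity) h17
  have hμ : 0 < min |k| |d| :=
    lt_min (abs_pos.2 (left_ne_zero_of_mul hkd.ne')) (abs_pos.2 (right_ne_zero_of_mul hkd.ne'))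
  set K := c₁ * √(2 * |n₁ / c₁| + 1) + c₂ * √(2 * |n₂ / c₂| + 1)
  have hK : 0 < K := by positivity
  refine ⟨min |k| |d| / K, div_pos hμ hK, ?_⟩
  intro r₀ hr₀ z hre him ρ₁ ρ₂ _ _ h₁ h₂
  have hz : ‖z‖ ≤ 2 := by
    linarith [norm_le_abs_re_add_abs_im z, show |z.re| = 1 by simp [hre]]
  have hprod : ‖(c₁ : ℂ) * ρ₁ - c₂ * ρ₂‖ * ‖(c₁ : ℂ) * ρ₁ + c₂ * ρ₂‖ = ‖(k : ℂ) * z - (d : ℂ) * r₀‖ := by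
    rw [← norm_mul, mul_sub_mul_mul_add_eq_of_sq_add_eq h₁ h₂]
    congr 4
    field_simp
    rfl
  have hsum : ‖(c₁ : ℂ) * ρ₁ + c₂ * ρ₂‖ ≤ K * √(1 + r₀) :=
    calc ‖(c₁ : ℂ) * ρ₁ + c₂ * ρ₂‖ ≤ c₁ * ‖ρ₁‖ + c₂ * ‖ρ₂‖ := by
          simpa [norm_mul, abs_of_pos hc₁, abs_of_pos hc₂] using norm_add_le (c₁ * ρ₁ : ℂ) (c₂ * ρ₂)
      _ ≤ c₁ * (√(2 * |n₁ / c₁| + 1) * √(1 + r₀)) + c₂ * (√(2 * |n₂ / c₂| + 1) * √(1 + r₀)) := by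
          gcongr
          exacts [norm_le_sqrt_mul_sqrt_of_sq_add_eq hr₀ hz h₁, norm_le_sqrt_mul_sqrt_of_sq_add_eq hr₀ hz h₂]
      _ = K * √(1 + r₀) := by ring
  exact div_mul_sqrt_le_of_mul_le (norm_nonneg _) hK (by positivity) hsum
    (hprod ▸ min_abs_mul_one_add_le_norm hkd hr₀ hre)

/-- The lower bound `|c₁ρ₁ − c₂ρ₂| ≥ C ⟨ξ'⟩` for `z ∈ Z₂` underlying estimate (5.12) in
Case 2 of Section 5 of the paper, under condition (1.7): `(c₁−c₂)(c₁n₁−c₂n₂) > 0`. Here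
`ρⱼ` is the root with positive imaginary part of `ρ² + r₀ = mⱼ z`, `mⱼ = nⱼ/cⱼ`, and the
constant `C > 0` depends only on `c₁, c₂, n₁, n₂` (not on `r₀` or `z`). -/
theorem stmt_19 (c₁ c₂ n₁ n₂ : ℝ) (hc₁ : 0 < c₁) (hc₂ : 0 < c₂) (hn₁ : 0 < n₁) (hn₂ : 0 < n₂)
    (h17 : 0 < (c₁ - c₂) * (c₁ * n₁ - c₂ * n₂)) :
    ∃ C : ℝ, 0 < C ∧
      ∀ r₀ : ℝ, 0 ≤ r₀ → ∀ z : ℂ, z.re = -1 → |z.im| ≤ 1 →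
        ∀ ρ₁ ρ₂ : ℂ, 0 < ρ₁.im → 0 < ρ₂.im →
          ρ₁ ^ 2 + (r₀ : ℂ) = ((n₁ / c₁ : ℝ) : ℂ) * z →
          ρ₂ ^ 2 + (r₀ : ℂ) = ((n₂ / c₂ : ℝ) : ℂ) * z →
          C * Real.sqrt (1 + r₀) ≤ ‖(c₁ : ℂ) * ρ₁ - (c₂ : ℂ) * ρ₂‖ :=
  stmt_19_general c₁ c₂ n₁ n₂ hc₁ hc₂ h17
end
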